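/- arXiv:1710.07250 — 4 statements merged into one kernel-verified Lean document; each statement's English description precedes it below -/
import Mathlib

section
/- Let q be a power of the prime p and n = p²s for a positive integer s. Let f ∈ F_q[x] be a monic polynomial dividing x^s − 1. Then α ∈ F_{q^n} satisfies m_α(x) = (x^n − 1)/f(x) if and only if β = Tr_{q^n/q^{ps}}(α) = Σ_{i=0}^{p−1} α^{q^{psi}} satisfies m_β(x) = (x^{ps} − 1)/f(x). -/
open Polynomial

/-- The `q`-associate of `f` applied to `x`: `L_f(x) = Σᵢ aᵢ x^(q^i)`. -/
noncomputable def qAssoc (q : ℕ) {F E : Type*} [CommSemiring F] [CommSemiring E] [Algebra F E]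
    (f : Polynomial F) (x : E) : E :=
  f.sum fun i a => algebraMap F E a * x ^ q ^ i

/-- `g` is the `F_q`-order of `α`: `g` is the monic generator of the ideal of
polynomials `f` with `L_f(α) = 0`. -/
def IsFqOrder (q : ℕ) {F E : Type*} [CommSemiring F] [CommSemiring E] [Algebra F E]
    (α : E) (g : Polynomial F) : Prop :=
  g.Monic ∧ ∀ f : Polynomial F, qAssoc q f α = 0 ↔ g ∣ f

/-- `α` is `k`-normal over `F`: the span of the conjugates `α^(q^i)`, `0 ≤ i ≤ n-1`,
has dimension `n - k`. -/
def IskNormal (q n k : ℕ) (F : Type*) {E : Type*} [Field F] [Field E] [Algebra F E]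
    (α : E) : Prop :=
  Module.finrank F (Submodule.span F (Set.range fun i : Fin n => α ^ q ^ (i : ℕ))) = n - k

/-- `α` is a primitive element of the finite field `E`: it generates `Eˣ`. -/
def IsPrimitiveElt {E : Type*} [Field E] (α : E) : Prop :=
  ∀ x : E, x ≠ 0 → ∃ m : ℕ, x = α ^ m

-- Number of squarefree divisors of a natural number.
open Classical in
noncomputable def Wnat (t : ℕ) : ℕ := (t.divisors.filter Squarefree).card

/-- Number of monic squarefree divisors of a polynomial. -/
noncomputable def Wpoly {F : Type*} [Field F] (g : Polynomial F) : ℕ :=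
  Set.ncard {h : Polynomial F | h.Monic ∧ Squarefree h ∧ h ∣ g}

/-- Polynomial Euler function `Φ(g) = |(F[x]/⟨g⟩)ˣ|`. -/
noncomputable def PhiPoly {F : Type*} [Field F] (g : Polynomial F) : ℕ :=
  Nat.card ((Polynomial F ⧸ Ideal.span {g})ˣ)

-- The polynomial Möbius function over `F`.
open Classical in
noncomputable def muq {F : Type*} [Field F] (f : Polynomial F) : ℤ :=
  if Squarefree f then
    (-1) ^ (UniqueFactorizationMonoid.normalizedFactors f).toFinset.card
  else 0

/-- The `q`-associate of `f` as a polynomial with coefficients in the extension `E`. -/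
noncomputable def LPoly (q : ℕ) {F : Type*} (E : Type*) [CommSemiring F] [CommSemiring E]
    [Algebra F E] (f : Polynomial F) : Polynomial E :=
  f.sum fun i a => Polynomial.C (algebraMap F E a) * Polynomial.X ^ q ^ i

-- `Ψ_f = ∏_{α : m_α = f} (X - α)` over `E`.
open Classical in
noncomputable def PsiPoly (q : ℕ) {F : Type*} (E : Type*) [Field F] [Field E] [Fintype E]
    [Algebra F E] (f : Polynomial F) : Polynomial E :=
  ∏ α ∈ Finset.univ.filter (fun α : E => IsFqOrder q α f), (X - C α)

/-- `n` is `F_q`-practical: `x^n - 1` has a divisor of each degree `1 ≤ k ≤ n-1` over `F`. -/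
def FqPractical (F : Type*) [Field F] (n : ℕ) : Prop :=
  ∀ k : ℕ, 1 ≤ k → k ≤ n - 1 →
    ∃ f : Polynomial F, f.natDegree = k ∧ f ∣ (X ^ n - 1 : Polynomial F)

/-!
Composition of `q`-associates is multiplication: `L_{gh} = L_g ∘ L_h`. In characteristic `p`,
`β = L_h(α)` with `h = ∑_{i<p} x^{psi} = (x^{ps} - 1)^{p-1}`, and `(x^{p²s} - 1)/f = g h`
with `g = (x^{ps} - 1)/f`. So the claim is `m_{L_h(α)} = g ↔ m_α = g h`.
If `m_α = g h`, cancel `h`. Conversely `m_α ∣ g h`; a prime `π` dividing the cofactor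
divides `x^s - 1`, hence `g` (because `f ∣ x^s - 1` and `f g = (x^s - 1)^p`), and then
`m_α ∣ (g/π) h` would force `g ∣ g/π`.
-/

theorem geom_sum_eq_sub_one_pow_of_charP {R : Type*} [CommRing R] [IsDomain R] {p : ℕ}
    [hp : Fact p.Prime] [CharP R p] (x : R) :
    ∑ i ∈ Finset.range p, x ^ i = (x - 1) ^ (p - 1) := by
  rcases eq_or_ne x 1 with rfl | hx
  · simp [zero_pow (Nat.sub_ne_zero_of_lt hp.out.one_lt)]
  · refine mul_right_cancel₀ (sub_ne_zero.2 hx) ?_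
    rw [geom_sum_mul, pow_sub_one_mul hp.out.ne_zero, sub_pow_char, one_pow]

theorem pow_dvd_of_mul_eq_pow_succ {R : Type*} [CommMonoidWithZero R] [IsCancelMulZero R]
    {f g u : R} {k : ℕ} (hf : f ≠ 0) (hfu : f ∣ u) (h : f * g = u ^ (k + 1)) :
    u ^ k ∣ g := by
  obtain ⟨w, rfl⟩ := hfu
  exact ⟨w, mul_left_cancel₀ hf (by rw [h, pow_succ]; ac_rfl)⟩

theorem associated_mul_of_forall_dvd_mul_iff {R : Type*} [CommMonoidWithZero R]
    [UniqueFactorizationMonoid R] {c g h : R} {n : ℕ} (hg : g ≠ 0) (hh : h ≠ 0)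
    (hhg : h ∣ g ^ n) (H : ∀ x, c ∣ x * h ↔ g ∣ x) : Associated c (g * h) := by
  obtain ⟨k, hk⟩ := (H g).2 dvd_rfl
  rw [hk]
  refine associated_mul_unit_right c k (by_contra fun hk_unit => ?_)
  have hk0 : k ≠ 0 := by rintro rfl; exact mul_ne_zero hg hh (by rw [hk, mul_zero])
  -- A prime factor of `k` divides `g`, and cancelling it leaves `c ∣ (g / π) * h`.
  obtain ⟨π, hπ, hπk⟩ := WfDvdMonoid.exists_irreducible_factor hk_unit hk0
  have hπg : π ∣ g := by
    refine hπ.prime.dvd_of_dvd_pow (n := n + 1) ?_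
    calc π ∣ k := hπk
      _ ∣ g * h := ⟨c, by rw [hk, mul_comm]⟩
      _ ∣ g ^ (n + 1) := by rw [pow_succ']; exact mul_dvd_mul_left g hhg
  obtain ⟨g', rfl⟩ := hπg
  obtain ⟨k', rfl⟩ := hπk
  have hg' : g' ≠ 0 := right_ne_zero_of_mul hg
  have hck' : c ∣ g' * h :=
    ⟨k', mul_left_cancel₀ hπ.ne_zero (by rw [← mul_assoc, hk, mul_left_comm])⟩
  have hπg' : π * g' ∣ 1 * g' := by rw [one_mul]; exact (H g').1 hck'
  exact hπ.not_isUnit (isUnit_of_dvd_one ((mul_dvd_mul_iff_right hg').1 hπg'))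

section QAssociate

variable {F E : Type*} [Field F] [Fintype F] [CommRing E] [Algebra F E]

theorem qAssoc_eq_aeval_frobenius (g : F[X]) (x : E) :
    qAssoc (Fintype.card F) g x = aeval (FiniteField.frobeniusAlgHom F E).toLinearMap g x := by
  simp [aeval_endomorphism, qAssoc, Module.End.pow_apply, FiniteField.coe_frobeniusAlgHom,
    pow_iterate, Algebra.smul_def]

theorem qAssoc_mul (g h : F[X]) (x : E) :
    qAssoc (Fintype.card F) (g * h) x =
      qAssoc (Fintype.card F) g (qAssoc (Fintype.card F) h x) := by
  simp only [qAssoc_eq_aeval_frobenius, map_mul, Module.End.mul_apply]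

theorem qAssoc_sum {ι : Type*} (s : Finset ι) (g : ι → F[X]) (x : E) :
    qAssoc (Fintype.card F) (∑ i ∈ s, g i) x =
      ∑ i ∈ s, qAssoc (Fintype.card F) (g i) x := by
  simp only [qAssoc_eq_aeval_frobenius, map_sum, LinearMap.sum_apply]

theorem qAssoc_X_pow (k : ℕ) (x : E) :
    qAssoc (Fintype.card F) (X ^ k : F[X]) x = x ^ Fintype.card F ^ k := by
  simp [qAssoc_eq_aeval_frobenius, Module.End.pow_apply, FiniteField.coe_frobeniusAlgHom,
    pow_iterate]

-- `E` as an `F[X]`-module in which `X` acts by the Frobenius, so that `g • α = L_g(α)`.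
variable (F) in
noncomputable def qAnnihilator (α : E) : Ideal F[X] :=
  Ideal.torsionOf F[X] (Module.AEval' (FiniteField.frobeniusAlgHom F E).toLinearMap)
    (Module.AEval'.of _ α)

theorem mem_qAnnihilator {α : E} {g : F[X]} :
    g ∈ qAnnihilator F α ↔ qAssoc (Fintype.card F) g α = 0 := by
  rw [qAnnihilator, Ideal.mem_torsionOf_iff, ← Module.AEval.of_aeval_smul,
    LinearEquiv.map_eq_zero_iff, qAssoc_eq_aeval_frobenius]
  rfl

theorem isFqOrder_qAssoc_iff {g h : F[X]} {n : ℕ} (hg : g.Monic) (hh : h.Monic)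
    (hhg : h ∣ g ^ n) (α : E) :
    IsFqOrder (Fintype.card F) (qAssoc (Fintype.card F) h α) g ↔
      IsFqOrder (Fintype.card F) α (g * h) := by
  constructor
  · rintro ⟨-, hβ⟩
    have hc := associated_mul_of_forall_dvd_mul_iff hg.ne_zero hh.ne_zero hhg
      (c := Submodule.IsPrincipal.generator (qAnnihilator F α)) fun x => by
        rw [← Submodule.IsPrincipal.mem_iff_generator_dvd, mem_qAnnihilator, qAssoc_mul, hβ]
    refine ⟨hg.mul hh, fun x => ?_⟩
    rw [← hc.dvd_iff_dvd_left, ← Submodule.IsPrincipal.mem_iff_generator_dvd, mem_qAnnihilator]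
  · rintro ⟨-, hα⟩
    exact ⟨hg, fun x => by rw [← qAssoc_mul, hα, mul_dvd_mul_iff_right hh.ne_zero]⟩

end QAssociate

theorem stmt2_general {F E : Type*} [Field F] [Fintype F] [Field E] [Algebra F E]
    (p e q s : ℕ) (hp : p.Prime) (hqe : q = p ^ e) (hq : Fintype.card F = q)
    (hs : 0 < s)
    (f : Polynomial F) (hf : f.Monic) (hfd : f ∣ (X ^ s - 1 : Polynomial F))
    (α : E) :
    IsFqOrder q α ((X ^ (p ^ 2 * s) - 1 : Polynomial F) /ₘ f) ↔
      IsFqOrder q (∑ i ∈ Finset.range p, α ^ q ^ (p * s * i))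
        ((X ^ (p * s) - 1 : Polynomial F) /ₘ f) := by
  subst hq
  have : Fact p.Prime := ⟨hp⟩
  have : CharP F p := charP_of_card_eq_prime_pow hqe
  set h : F[X] := ∑ i ∈ Finset.range p, X ^ (p * s * i)
  have hu : (X ^ s - 1 : F[X]) ^ p = X ^ (p * s) - 1 := by
    rw [sub_pow_char, one_pow, ← pow_mul, mul_comm]
  obtain ⟨g, hfg⟩ : f ∣ X ^ (p * s) - 1 := hu ▸ dvd_pow hfd hp.ne_zero
  have hXps : (X ^ (p * s) - 1 : F[X]).Monic := by
    simpa using monic_X_pow_sub_C (1 : F) (mul_ne_zero hp.ne_zero hs.ne')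
  have hh : h = (X ^ (p * s) - 1) ^ (p - 1) := by
    simp only [h, pow_mul]
    exact geom_sum_eq_sub_one_pow_of_charP _
  have hX : (X ^ (p ^ 2 * s) - 1 : F[X]) = f * (g * h) := by
    rw [← mul_assoc, ← hfg, hh, mul_pow_sub_one hp.ne_zero, sub_pow_char, one_pow, ← pow_mul]
    ring_nf
  have hβ : ∑ i ∈ Finset.range p, α ^ Fintype.card F ^ (p * s * i) =
      qAssoc (Fintype.card F) h α := by
    simp only [h, qAssoc_sum, qAssoc_X_pow]
  have hg : g.Monic := hf.of_mul_monic_left (hfg ▸ hXps)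
  have hhg : h ∣ g ^ (p * (p - 1)) := by
    have : X ^ s - 1 ∣ g := (dvd_pow_self _ (Nat.sub_ne_zero_of_lt hp.one_lt)).trans
      (pow_dvd_of_mul_eq_pow_succ hf.ne_zero hfd (by rw [Nat.sub_add_cancel hp.one_le, hu, hfg]))
    rw [hh, ← hu, pow_mul]
    exact pow_dvd_pow_of_dvd (pow_dvd_pow_of_dvd this p) _
  rw [hX, mul_divByMonic_cancel_left _ hf, hfg, mul_divByMonic_cancel_left _ hf, hβ]
  exact (isFqOrder_qAssoc_iff hg (hh ▸ hXps.pow _) hhg α).symm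

/-- Let `n = p²s` and `f` a monic divisor of `x^s - 1`. Then
`m_α = (x^n-1)/f` iff `β = Tr_{q^n/q^{ps}}(α) = Σ_{i<p} α^(q^{psi})` has `m_β = (x^{ps}-1)/f`. -/
theorem stmt2 {F E : Type*} [Field F] [Fintype F] [Field E] [Fintype E] [Algebra F E]
    (p e q s : ℕ) (hp : p.Prime) (hqe : q = p ^ e) (hq : Fintype.card F = q)
    (hs : 0 < s) (hdim : Module.finrank F E = p ^ 2 * s)
    (f : Polynomial F) (hf : f.Monic) (hfd : f ∣ (X ^ s - 1 : Polynomial F))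
    (α : E) :
    IsFqOrder q α ((X ^ (p ^ 2 * s) - 1 : Polynomial F) /ₘ f) ↔
      IsFqOrder q (∑ i ∈ Finset.range p, α ^ q ^ (p * s * i))
        ((X ^ (p * s) - 1 : Polynomial F) /ₘ f) :=
  stmt2_general p e q s hp hqe hq hs f hf hfd α
end

section
/- Let q ≥ 3 be an odd prime power and t ≥ 2 an integer. Then W(q^{2^t} − 1) < 2 · q^{2^t/(t−1)}. -/
open Polynomial

/-!
Since `q^(2^t) - 1 = (q^2 - 1) ∏_{1 ≤ j < t} (q^(2^j) + 1)` and `W(n) = 2^ω(n)`, it suffices to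
bound the number of odd prime factors of each factor, counting the prime `2` once.
An odd prime `p ∣ q^(2^j) + 1` satisfies `p ≡ 1 mod 2^(j+1)`, as `q` has order `2^(j+1)` modulo
`p`; and `k` distinct primes `≡ 1 mod M` have product at least `M^k k!`. Hence, with
`L = log₂ q`, the factor `q^(2^j) + 1` has at most `(2^j L + 1)/(j + 2)` odd prime factors and
`q^2 - 1`, which is divisible by `8`, at most `2L - 3`. These bounds sum to less than
`2^t L/(t - 1)`.
-/

open Finset
open scoped Nat

def oddPrimeFactors (n : ℕ) : Finset ℕ := n.primeFactors.erase 2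

@[simp]
lemma mem_oddPrimeFactors {n p : ℕ} :
    p ∈ oddPrimeFactors n ↔ p ≠ 2 ∧ p.Prime ∧ p ∣ n ∧ n ≠ 0 := by
  simp [oddPrimeFactors]

lemma card_primeFactors_le_card_oddPrimeFactors_add_one (n : ℕ) :
    #n.primeFactors ≤ #(oddPrimeFactors n) + 1 := by
  have := pred_card_le_card_erase (s := n.primeFactors) (a := 2)
  rw [oddPrimeFactors]
  omega

lemma card_oddPrimeFactors_mul_le (a b : ℕ) :
    #(oddPrimeFactors (a * b)) ≤ #(oddPrimeFactors a) + #(oddPrimeFactors b) := by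
  refine (card_le_card fun p hp => ?_).trans (card_union_le _ _)
  obtain ⟨hp2, hp, hdvd, hab⟩ := mem_oddPrimeFactors.1 hp
  rw [mem_union, mem_oddPrimeFactors, mem_oddPrimeFactors]
  rcases hp.dvd_mul.1 hdvd with h | h
  · exact .inl ⟨hp2, hp, h, left_ne_zero_of_mul hab⟩
  · exact .inr ⟨hp2, hp, h, right_ne_zero_of_mul hab⟩

lemma card_oddPrimeFactors_prod_le {ι : Type*} (s : Finset ι) (f : ι → ℕ) :
    #(oddPrimeFactors (∏ i ∈ s, f i)) ≤ ∑ i ∈ s, #(oddPrimeFactors (f i)) := by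
  classical
  induction s using Finset.induction_on with
  | empty => simp [oddPrimeFactors]
  | insert i s hi ih =>
    rw [prod_insert hi, sum_insert hi]
    exact (card_oddPrimeFactors_mul_le _ _).trans (by omega)

lemma Wnat_eq_two_pow_card_primeFactors {n : ℕ} (hn : n ≠ 0) :
    Wnat n = 2 ^ #n.primeFactors := by
  classical
  have h := Nat.sum_divisors_filter_squarefree hn (f := fun _ => 1)
  simp only [sum_const, smul_eq_mul, mul_one, card_powerset, Nat.factors_eq] at h
  rw [Wnat]
  convert h using 2
  rfl

lemma pow_two_pow_sub_one_eq (a : ℕ) {t : ℕ} (ht : 1 ≤ t) :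
    a ^ 2 ^ t - 1 = (a ^ 2 - 1) * ∏ j ∈ Ico 1 t, (a ^ 2 ^ j + 1) := by
  induction t, ht using Nat.le_induction with
  | base => simp
  | succ t ht ih =>
    rw [prod_Ico_succ_top ht, ← mul_assoc, ← ih, pow_succ, pow_mul, sq, mul_self_tsub_one,
      mul_comm]

lemma Wnat_pow_two_pow_sub_one_le {q t : ℕ} (hq : 1 < q) (ht : 1 ≤ t) :
    Wnat (q ^ 2 ^ t - 1) ≤ 2 * 2 ^ (#(oddPrimeFactors (q ^ 2 - 1)) +
      ∑ j ∈ Ico 1 t, #(oddPrimeFactors (q ^ 2 ^ j + 1))) := by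
  have hm : q ^ 2 ^ t - 1 ≠ 0 := by
    have := Nat.one_lt_pow (pow_ne_zero t two_ne_zero) hq
    omega
  rw [Wnat_eq_two_pow_card_primeFactors hm, ← pow_succ']
  refine Nat.pow_le_pow_right two_pos
    ((card_primeFactors_le_card_oddPrimeFactors_add_one _).trans ?_)
  rw [pow_two_pow_sub_one_eq q ht]
  exact Nat.add_le_add_right ((card_oddPrimeFactors_mul_le _ _).trans
    (Nat.add_le_add_left (card_oddPrimeFactors_prod_le _ _) _)) 1

lemma factorial_card_le_prod {S : Finset ℕ} (h0 : 0 ∉ S) : (#S)! ≤ ∏ x ∈ S, x := by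
  induction S using Finset.induction_on_max with
  | empty => simp
  | insert a s ha ih =>
    have has : a ∉ s := fun h => (ha a h).false
    have hsub : insert a s ⊆ Icc 1 a := fun x hx => by
      rcases mem_insert.1 hx with rfl | hx
      · exact mem_Icc.2 ⟨Nat.pos_of_ne_zero fun h => h0 (h ▸ mem_insert_self _ _), le_rfl⟩
      · exact mem_Icc.2 ⟨Nat.pos_of_ne_zero fun h => h0 (h ▸ mem_insert_of_mem hx),
          (ha x hx).le⟩
    have hcard : #s + 1 ≤ a := by
      simpa [card_insert_of_notMem has] using card_le_card hsub
    rw [card_insert_of_notMem has, prod_insert has, Nat.factorial_succ]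
    exact Nat.mul_le_mul hcard (ih fun h => h0 (mem_insert_of_mem h))

lemma pow_card_mul_factorial_card_le_prod {M : ℕ} {S : Finset ℕ} (hM : ∀ x ∈ S, M ∣ x)
    (h0 : 0 ∉ S) : M ^ #S * (#S)! ≤ ∏ x ∈ S, x := by
  rcases Nat.eq_zero_or_pos M with rfl | hMpos
  · obtain rfl : S = ∅ := eq_empty_of_forall_notMem fun x hx =>
      h0 (zero_dvd_iff.1 (hM x hx) ▸ hx)
    simp
  have hinj : Set.InjOn (· / M) S := fun x hx y hy hxy => by
    rw [← Nat.div_mul_cancel (hM x hx), ← Nat.div_mul_cancel (hM y hy)]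
    exact congrArg (· * M) hxy
  have h0' : 0 ∉ S.image (· / M) := by
    simp only [mem_image, not_exists, not_and]
    intro x hx hx0
    have := Nat.div_mul_cancel (hM x hx)
    rw [hx0, zero_mul] at this
    exact h0 (this ▸ hx)
  calc M ^ #S * (#S)! = M ^ #S * (#(S.image (· / M)))! := by rw [card_image_of_injOn hinj]
    _ ≤ M ^ #S * ∏ y ∈ S.image (· / M), y :=
        Nat.mul_le_mul_left _ (factorial_card_le_prod h0')
    _ = ∏ x ∈ S, M * (x / M) := by rw [prod_image hinj, prod_mul_distrib, prod_const]
    _ = ∏ x ∈ S, x := prod_congr rfl fun x hx => Nat.mul_div_cancel' (hM x hx)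

lemma two_pow_mul_pow_card_mul_factorial_le {N M s : ℕ} (hN : N ≠ 0) (hs : 2 ^ s ∣ N)
    (hM : ∀ p ∈ oddPrimeFactors N, M ∣ p - 1) :
    2 ^ s * (M ^ #(oddPrimeFactors N) * (#(oddPrimeFactors N))!) ≤ N := by
  set S := oddPrimeFactors N
  have hinj : Set.InjOn (· - 1) S := fun p hp p' hp' h => by
    have := (mem_oddPrimeFactors.1 hp).2.1.one_le
    have := (mem_oddPrimeFactors.1 hp').2.1.one_le
    simp only at h
    omega
  have h0 : 0 ∉ S.image (· - 1) := by
    simp only [mem_image, not_exists, not_and]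
    intro p hp hp0
    have := (mem_oddPrimeFactors.1 hp).2.1.two_le
    omega
  have hprod : M ^ #S * (#S)! ≤ ∏ p ∈ S, p :=
    calc M ^ #S * (#S)! = M ^ #(S.image (· - 1)) * (#(S.image (· - 1)))! := by
          rw [card_image_of_injOn hinj]
      _ ≤ ∏ x ∈ S.image (· - 1), x :=
          pow_card_mul_factorial_card_le_prod (by simpa using hM) h0
      _ = ∏ p ∈ S, (p - 1) := prod_image hinj
      _ ≤ ∏ p ∈ S, p := prod_le_prod' fun _ _ => Nat.sub_le _ _
  have hcop : Nat.Coprime (2 ^ s) (∏ p ∈ S, p) :=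
    Nat.Coprime.prod_right fun p hp => Nat.Coprime.pow_left _ <|
      (Nat.coprime_primes Nat.prime_two (mem_oddPrimeFactors.1 hp).2.1).2
        (mem_oddPrimeFactors.1 hp).1.symm
  have hdvd : ∏ p ∈ S, p ∣ N :=
    (prod_dvd_prod_of_subset _ _ _ (erase_subset _ _)).trans (Nat.prod_primeFactors_dvd N)
  calc 2 ^ s * (M ^ #S * (#S)!) ≤ 2 ^ s * ∏ p ∈ S, p := Nat.mul_le_mul_left _ hprod
    _ ≤ N := Nat.le_of_dvd (Nat.pos_of_ne_zero hN) (hcop.mul_dvd_of_dvd_of_dvd hs hdvd)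

lemma two_pow_succ_dvd_sub_one_of_dvd_pow_two_pow_add_one {p a j : ℕ} (hp : p.Prime)
    (hp2 : p ≠ 2) (h : p ∣ a ^ 2 ^ j + 1) : 2 ^ (j + 1) ∣ p - 1 := by
  have := Fact.mk hp
  have : Fact (2 < p) := ⟨hp.two_le.lt_of_ne' hp2⟩
  have hx : (a : ZMod p) ^ 2 ^ j = -1 := by
    rw [eq_neg_iff_add_eq_zero]
    exact_mod_cast (ZMod.natCast_eq_zero_iff _ _).2 h
  have hord : orderOf (a : ZMod p) = 2 ^ (j + 1) :=
    orderOf_eq_prime_pow (by rw [hx]; exact ZMod.neg_one_ne_one)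
      (by rw [pow_succ, pow_mul, hx]; norm_num)
  rw [← hord]
  exact ZMod.orderOf_dvd_card_sub_one fun h0 => by simp [h0] at hx

lemma two_pow_le_two_mul_factorial (k : ℕ) : 2 ^ k ≤ 2 * k ! := by
  cases k with
  | zero => simp
  | succ k =>
    have : 2 ^ k ≤ (k + 1)! := by
      simpa [add_comm] using Nat.factorial_mul_pow_le_factorial (m := 1) (n := k)
    rw [pow_succ, mul_comm]
    exact Nat.mul_le_mul_left 2 this

lemma two_pow_card_oddPrimeFactors_add_three_le {q : ℕ} (hodd : Odd q) (hq : 1 < q) :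
    2 ^ (#(oddPrimeFactors (q ^ 2 - 1)) + 3) ≤ q ^ 2 := by
  have hq2 : 1 < q ^ 2 := Nat.one_lt_pow two_ne_zero hq
  have h := two_pow_mul_pow_card_mul_factorial_le (N := q ^ 2 - 1) (M := 2) (s := 3)
    (by omega) (Nat.eight_dvd_sq_sub_one_of_odd hodd) fun p hp =>
      ((mem_oddPrimeFactors.1 hp).2.1.even_sub_one (mem_oddPrimeFactors.1 hp).1).two_dvd
  set k := #(oddPrimeFactors (q ^ 2 - 1))
  calc 2 ^ (k + 3) = 2 ^ 3 * (2 ^ k * 1) := by ring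
    _ ≤ 2 ^ 3 * (2 ^ k * k !) := by gcongr; exact Nat.factorial_pos k
    _ ≤ q ^ 2 := h.trans (Nat.sub_le _ _)

lemma two_pow_mul_card_oddPrimeFactors_le {q : ℕ} (hodd : Odd q) (j : ℕ) :
    2 ^ ((j + 2) * #(oddPrimeFactors (q ^ 2 ^ j + 1))) ≤ 2 * q ^ 2 ^ j := by
  have h := two_pow_mul_pow_card_mul_factorial_le (N := q ^ 2 ^ j + 1) (M := 2 ^ (j + 1))
    (s := 1) (by omega) (by simpa using (hodd.pow.add_one).two_dvd)
    fun p hp => by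
      obtain ⟨hp2, hp, hdvd, -⟩ := mem_oddPrimeFactors.1 hp
      exact two_pow_succ_dvd_sub_one_of_dvd_pow_two_pow_add_one hp hp2 hdvd
  set k := #(oddPrimeFactors (q ^ 2 ^ j + 1))
  have : 1 ≤ q ^ 2 ^ j := Nat.one_le_pow _ _ hodd.pos
  calc 2 ^ ((j + 2) * k) = (2 ^ (j + 1)) ^ k * 2 ^ k := by ring
    _ ≤ (2 ^ (j + 1)) ^ k * (2 * k !) := Nat.mul_le_mul_left _ (two_pow_le_two_mul_factorial k)
    _ = 2 ^ 1 * ((2 ^ (j + 1)) ^ k * k !) := by ring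
    _ ≤ 2 * q ^ 2 ^ j := by omega

lemma natCast_le_logb_two {a b : ℕ} (h : 2 ^ a ≤ b) : (a : ℝ) ≤ Real.logb 2 b := by
  have hb : (0 : ℝ) < b := by exact_mod_cast (Nat.two_pow_pos a).trans_le h
  rw [Real.le_logb_iff_rpow_le one_lt_two hb, Real.rpow_natCast]
  exact_mod_cast h

lemma card_oddPrimeFactors_sq_sub_one_le {q : ℕ} (hodd : Odd q) (hq : 1 < q) :
    (#(oddPrimeFactors (q ^ 2 - 1)) : ℝ) ≤ 2 * Real.logb 2 q - 3 := by
  have := natCast_le_logb_two (two_pow_card_oddPrimeFactors_add_three_le hodd hq)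
  rw [Nat.cast_pow, Real.logb_pow] at this
  push_cast at this
  linarith

lemma card_oddPrimeFactors_pow_two_pow_add_one_le {q : ℕ} (hodd : Odd q) (j : ℕ) :
    (#(oddPrimeFactors (q ^ 2 ^ j + 1)) : ℝ) ≤ (2 ^ j * Real.logb 2 q + 1) / (j + 2) := by
  have := natCast_le_logb_two (two_pow_mul_card_oddPrimeFactors_le hodd j)
  push_cast at this
  have hq : (q : ℝ) ≠ 0 := by exact_mod_cast hodd.pos.ne'
  rw [Real.logb_mul two_ne_zero (pow_ne_zero _ hq), Real.logb_self_eq_one one_lt_two,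
    Real.logb_pow] at this
  rw [le_div_iff₀ (by positivity)]
  push_cast at this
  linarith

lemma mul_sub_one_le_two_pow_mul_sub_four {t : ℕ} (ht : 5 ≤ t) :
    (t : ℝ) * (t - 1) ≤ 2 ^ t * (t - 4) := by
  induction t, ht using Nat.le_induction with
  | base => norm_num
  | succ t ht ih =>
    have h32 : (32 : ℝ) ≤ 2 ^ t := by exact_mod_cast Nat.pow_le_pow_right two_pos ht
    have : (5 : ℝ) ≤ t := by exact_mod_cast ht
    push_cast
    rw [pow_succ]
    nlinarith

lemma add_one_div_add_two_le_sub {L : ℝ} (hL : 1 ≤ L) {t : ℕ} (ht : 5 ≤ t) :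
    ((2 : ℝ) ^ t * L + 1) / (t + 2) ≤ 2 ^ (t + 1) * L / t - 2 ^ t * L / (t - 1) := by
  have : (5 : ℝ) ≤ t := by exact_mod_cast ht
  have key : (t : ℝ) * (t - 1) ≤ 2 ^ t * (t - 4) * L :=
    (mul_sub_one_le_two_pow_mul_sub_four ht).trans
      (le_mul_of_one_le_right (mul_nonneg (by positivity) (by linarith)) hL)
  rw [div_sub_div _ _ (by positivity) (by linarith), div_le_div_iff₀ (by positivity)
    (by nlinarith), pow_succ]
  nlinarith

lemma two_mul_sub_three_add_sum_lt {L : ℝ} (hL : 1 ≤ L) {t : ℕ} (ht : 2 ≤ t) :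
    2 * L - 3 + ∑ j ∈ Ico 1 t, ((2 : ℝ) ^ j * L + 1) / (j + 2) < 2 ^ t * L / (t - 1) := by
  induction t, ht using Nat.le_induction with
  | base => norm_num; linarith
  | succ t ht ih =>
    rw [sum_Ico_succ_top (by omega)]
    push_cast
    rcases lt_or_ge t 5 with h | h
    · interval_cases t <;> norm_num [sum_Ico_succ_top] <;> linarith
    · have := add_one_div_add_two_le_sub hL h
      simp only [add_sub_cancel_right]
      linarith

lemma two_pow_lt_rpow_of_lt_mul_logb {K : ℕ} {q x : ℝ} (hq : 0 < q)
    (h : (K : ℝ) < x * Real.logb 2 q) : (2 : ℝ) ^ K < q ^ x := by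
  rw [← Real.rpow_natCast, ← Real.rpow_logb two_pos (by norm_num) hq,
    ← Real.rpow_mul two_pos.le, mul_comm (Real.logb 2 q)]
  exact Real.rpow_lt_rpow_of_exponent_lt one_lt_two h

theorem stmt6_general (q t : ℕ) (hodd : Odd q)
    (hq3 : 3 ≤ q) (ht : 2 ≤ t) :
    (Wnat (q ^ 2 ^ t - 1) : ℝ) < 2 * (q : ℝ) ^ ((2 ^ t : ℝ) / ((t : ℝ) - 1)) := by
  set L := Real.logb 2 q
  set K := #(oddPrimeFactors (q ^ 2 - 1)) + ∑ j ∈ Ico 1 t, #(oddPrimeFactors (q ^ 2 ^ j + 1))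
    with hK_def
  have hL : 1 ≤ L := by
    rw [Real.le_logb_iff_rpow_le one_lt_two (by positivity), Real.rpow_one]
    exact_mod_cast (by omega : 2 ≤ q)
  have hK : (K : ℝ) < 2 ^ t / ((t : ℝ) - 1) * L := by
    rw [hK_def]
    push_cast
    calc _ ≤ 2 * L - 3 + ∑ j ∈ Ico 1 t, ((2 : ℝ) ^ j * L + 1) / (j + 2) :=
          add_le_add (card_oddPrimeFactors_sq_sub_one_le hodd (by omega))
            (sum_le_sum fun j _ => card_oddPrimeFactors_pow_two_pow_add_one_le hodd j)
      _ < 2 ^ t * L / (t - 1) := two_mul_sub_three_add_sum_lt hL ht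
      _ = 2 ^ t / ((t : ℝ) - 1) * L := by ring
  calc (Wnat (q ^ 2 ^ t - 1) : ℝ) ≤ 2 * 2 ^ K := by
        exact_mod_cast Wnat_pow_two_pow_sub_one_le (by omega) (by omega)
    _ < _ := by
      gcongr
      exact two_pow_lt_rpow_of_lt_mul_logb (by positivity) hK

/-- For an odd prime power `q ≥ 3` and `t ≥ 2`,
`W(q^{2^t} - 1) < 2·q^{2^t/(t-1)}`. -/
theorem stmt6 (q p e t : ℕ) (hp : p.Prime) (hqe : q = p ^ e) (hodd : Odd q)
    (hq3 : 3 ≤ q) (ht : 2 ≤ t) :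
    (Wnat (q ^ 2 ^ t - 1) : ℝ) < 2 * (q : ℝ) ^ ((2 ^ t : ℝ) / ((t : ℝ) - 1)) :=
  stmt6_general q t hodd hq3 ht
end

section
/- Let q be a power of the prime p and let n be a positive integer such that every prime divisor of n divides p(q − 1). Then n is F_q-practical, i.e., for every 1 ≤ k ≤ n − 1 the polynomial x^n − 1 has a divisor of degree k in F_q[x]. -/
/-!
Write `n = r * a` with `r` prime. Then `X ^ n - 1` is a product of `r` monic factors of degree
`a`, one of which is `X ^ a - 1`: the factors `X ^ a - ζ ^ i` for a primitive `r`-th root of unity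
`ζ` when `r ∣ q - 1`, and `r` copies of `X ^ a - 1` when `r = p`, by the Frobenius identity.
By induction `X ^ a - 1` has monic divisors of every degree `t ≤ a`, and such a divisor times
`s` of the remaining factors has degree `s * a + t`, which covers every degree up to `n`.
-/

open Polynomial

namespace Polynomial

variable {R : Type*}

section CommSemiring

variable [CommSemiring R]

def HasMonicDivisorOfEachDegree (f : R[X]) : Prop :=
  ∀ k ≤ f.natDegree, ∃ g : R[X], g.Monic ∧ g.natDegree = k ∧ g ∣ f

theorem hasMonicDivisorOfEachDegree_zero : (0 : R[X]).HasMonicDivisorOfEachDegree := by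
  intro k hk
  rw [natDegree_zero, Nat.le_zero] at hk
  exact ⟨1, monic_one, hk ▸ natDegree_one, one_dvd _⟩

theorem HasMonicDivisorOfEachDegree.prod_range {f : ℕ → R[X]} {d : ℕ}
    (hmonic : ∀ i, (f i).Monic) (hdeg : ∀ i, (f i).natDegree = d)
    (h0 : (f 0).HasMonicDivisorOfEachDegree) (N : ℕ) :
    (∏ i ∈ Finset.range N, f i).HasMonicDivisorOfEachDegree := by
  unfold HasMonicDivisorOfEachDegree
  rw [natDegree_prod_of_monic _ _ fun i _ => hmonic i]
  simp only [hdeg, Finset.sum_const, Finset.card_range, smul_eq_mul]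
  induction N with
  | zero =>
    intro k hk
    rw [zero_mul, Nat.le_zero] at hk
    exact ⟨1, monic_one, hk ▸ natDegree_one, one_dvd _⟩
  | succ N ih =>
    intro k hk
    by_cases hkd : k ≤ d
    · obtain ⟨g, hg, hgk, hgf⟩ := h0 k ((hdeg 0).symm ▸ hkd)
      exact ⟨g, hg, hgk, hgf.trans (Finset.dvd_prod_of_mem f (by simp))⟩
    · obtain ⟨g, hg, hgk, hgf⟩ := ih (k - d) (by rw [Nat.succ_mul] at hk; omega)
      refine ⟨g * f N, hg.mul (hmonic N), ?_, ?_⟩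
      · rw [hg.natDegree_mul (hmonic N), hgk, hdeg]
        omega
      · rw [Finset.prod_range_succ]
        exact mul_dvd_mul_right hgf _

end CommSemiring

variable [CommRing R] [IsDomain R]

theorem X_pow_mul_sub_one_eq_prod {ζ : R} {r : ℕ} (hζ : IsPrimitiveRoot ζ r) (hr : 0 < r)
    (a : ℕ) : (X ^ (r * a) - 1 : R[X]) = ∏ i ∈ Finset.range r, (X ^ a - C (ζ ^ i)) := by
  have h := congrArg (fun P : R[X] => P.comp (X ^ a)) (X_pow_sub_C_eq_prod hζ hr (one_pow r))
  simpa only [sub_comp, pow_comp, X_comp, C_comp, one_comp, prod_comp, mul_one, map_one,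
    ← pow_mul, mul_comm a] using h

theorem hasMonicDivisorOfEachDegree_X_pow_sub_one (p : ℕ) [ExpChar R p] {n : ℕ}
    (h : ∀ r : ℕ, r.Prime → r ∣ n → r = p ∨ ∃ ζ : R, IsPrimitiveRoot ζ r) :
    (X ^ n - 1 : R[X]).HasMonicDivisorOfEachDegree := by
  induction n using induction_on_primes with
  | zero => simpa only [pow_zero, sub_self] using hasMonicDivisorOfEachDegree_zero
  | one =>
    intro k hk
    rw [pow_one, ← C_1, natDegree_X_sub_C] at hk
    rcases Nat.le_one_iff_eq_zero_or_eq_one.1 hk with rfl | rfl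
    · exact ⟨1, monic_one, natDegree_one, one_dvd _⟩
    · exact ⟨X - C 1, monic_X_sub_C 1, natDegree_X_sub_C 1, by rw [pow_one, C_1]⟩
  | prime_mul r a hr ih =>
    rcases eq_or_ne a 0 with rfl | ha
    · simpa only [mul_zero, pow_zero, sub_self] using hasMonicDivisorOfEachDegree_zero
    have hdiv := ih fun s hs hsa => h s hs (hsa.trans (dvd_mul_left a r))
    rcases h r hr (dvd_mul_right r a) with rfl | ⟨ζ, hζ⟩
    · have hfrob : (X ^ (r * a) - 1 : R[X]) = ∏ _i ∈ Finset.range r, (X ^ a - C 1) := by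
        rw [Finset.prod_const, Finset.card_range, C_1, sub_pow_expChar, one_pow, ← pow_mul,
          mul_comm]
      rw [hfrob]
      exact HasMonicDivisorOfEachDegree.prod_range (f := fun _ => X ^ a - C 1)
        (fun _ => monic_X_pow_sub_C 1 ha) (fun _ => natDegree_X_pow_sub_C)
        (by rwa [C_1]) r
    · rw [X_pow_mul_sub_one_eq_prod hζ hr.pos]
      exact HasMonicDivisorOfEachDegree.prod_range (f := fun i => X ^ a - C (ζ ^ i))
        (fun _ => monic_X_pow_sub_C _ ha) (fun _ => natDegree_X_pow_sub_C)
        (by rwa [pow_zero, C_1]) r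

end Polynomial

theorem exists_isPrimitiveRoot_of_prime_dvd_card_units {M : Type*} [CommMonoid M] [Fintype Mˣ]
    {r : ℕ} (hr : r.Prime) (h : r ∣ Fintype.card Mˣ) : ∃ ζ : M, IsPrimitiveRoot ζ r := by
  have := Fact.mk hr
  obtain ⟨ζ, hζ⟩ := exists_prime_orderOf_dvd_card r h
  exact ⟨ζ, IsPrimitiveRoot.coe_units_iff.2 (hζ ▸ IsPrimitiveRoot.orderOf ζ)⟩

theorem FiniteField.charP_of_card_eq_prime_pow {F : Type*} [Field F] [Fintype F] {p e : ℕ}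
    (hp : p.Prime) (h : Fintype.card F = p ^ e) : CharP F p := by
  have hcard := FiniteField.cast_card_eq_zero F
  rw [h, Nat.cast_pow] at hcard
  exact (CharP.charP_iff_prime_eq_zero hp).2 (pow_eq_zero_iff'.1 hcard).1

theorem stmt12_general {F : Type*} [Field F] [Fintype F]
    (p e q n : ℕ) (hp : p.Prime) (hqe : q = p ^ e) (hq : Fintype.card F = q)
    (hdvd : ∀ r : ℕ, r.Prime → r ∣ n → r ∣ p * (q - 1)) :
    FqPractical F n := by
  classical
  have : CharP F p := FiniteField.charP_of_card_eq_prime_pow hp (hq.trans hqe)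
  have : ExpChar F p := ExpChar.prime hp
  have hroots (r : ℕ) (hr : r.Prime) (hrn : r ∣ n) : r = p ∨ ∃ ζ : F, IsPrimitiveRoot ζ r := by
    rcases hr.dvd_mul.1 (hdvd r hr hrn) with hrp | hrq
    · exact .inl ((Nat.prime_dvd_prime_iff_eq hr hp).1 hrp)
    · exact .inr (exists_isPrimitiveRoot_of_prime_dvd_card_units hr
        (by rwa [Fintype.card_units, hq]))
  intro k _ hk
  obtain ⟨g, -, hgk, hg⟩ := hasMonicDivisorOfEachDegree_X_pow_sub_one p hroots k
    (by rw [← C_1, natDegree_X_pow_sub_C]; omega)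
  exact ⟨g, hgk, hg⟩

/-- If every prime divisor of `n` divides `p(q-1)`, then `n` is
`F_q`-practical. -/
theorem stmt12 {F : Type*} [Field F] [Fintype F]
    (p e q n : ℕ) (hp : p.Prime) (hqe : q = p ^ e) (hq : Fintype.card F = q)
    (hn : 0 < n) (hdvd : ∀ r : ℕ, r.Prime → r ∣ n → r ∣ p * (q - 1)) :
    FqPractical F n :=
  stmt12_general p e q n hp hqe hq hdvd
end

section
/- Let q be a prime power, n a positive integer, and 0 ≤ k ≤ n. The number N_k of k-normal elements of F_{q^n} over F_q is given by N_k = Σ_{h | x^n−1, deg(h) = n−k} Φ(h), where the sum runs over monic divisors h of x^n − 1 in F_q[x] of degree n − k. -/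
open Polynomial

/-! The Frobenius `φ : x ↦ x ^ q` makes `E` a finite `F[X]`-module killed by `X ^ n - 1`,
and the span of the conjugates `α ^ q ^ i` is the cyclic submodule generated by `α`, whose
dimension is the degree of the `F_q`-order of `α` (the monic generator of its annihilator).

For a monic `d ∣ X ^ n - 1` the `d`-torsion of `E` has exactly `q ^ deg d` elements: at most that
many since they are roots of the `q`-associate of `d`, which has degree `q ^ deg d`, and then
rank-nullity for `d(φ)` and `((X ^ n - 1) / d)(φ)` forces equality. The ring `F[X]/(h)` has the
same torsion counts for every `d ∣ h`, so Möbius inversion over the monic divisors of `h` shows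
that `E` and `F[X]/(h)` contain equally many elements of order exactly `h`. In `F[X]/(h)` these
are the units, counted by `Φ(h)`. -/

theorem natCard_preimage_eq_finsum {α β : Type*} [Finite α] (c : α → β) {S : Set β}
    (hS : S.Finite) : Nat.card (c ⁻¹' S) = ∑ᶠ b ∈ S, Nat.card (c ⁻¹' {b}) := by
  simp only [Nat.card_coe_set_eq]
  rw [← Set.biUnion_preimage_singleton]
  exact hS.ncard_biUnion (fun _ _ => Set.toFinite _)
    fun a _ b _ hab => (Set.disjoint_singleton.2 hab).preimage c

theorem Polynomial.finite_setOf_monic_dvd {F : Type*} [Field F] {g : F[X]} (hg : g ≠ 0) :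
    {d : F[X] | d.Monic ∧ d ∣ g}.Finite :=
  Set.finite_coe_iff.1 (@Finite.of_fintype _ (fintypeSubtypeMonicDvd g hg))

theorem finrank_range_eq_natDegree {F V : Type*} [Field F] [AddCommGroup V] [Module F V]
    (T : F[X] →ₗ[F] V) {g : F[X]} (hker : ∀ f, T f = 0 ↔ g ∣ f) :
    Module.finrank F (LinearMap.range T) = g.natDegree := by
  have hker' : LinearMap.ker T = (Ideal.span {g}).restrictScalars F := by
    ext f
    rw [LinearMap.mem_ker, hker, Submodule.restrictScalars_mem, Ideal.mem_span_singleton]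
  rw [← T.quotKerEquivRange.finrank_eq, hker',
    (Submodule.Quotient.restrictScalarsEquiv F _).finrank_eq, finrank_quotient_span_eq_natDegree]

instance {R A M : Type*} [CommSemiring R] [Semiring A] [Algebra R A] [AddCommMonoid M]
    [Module A M] [Module R M] [IsScalarTower R A M] (a : A) [Finite M] :
    Finite (Module.AEval R M a) :=
  inferInstanceAs (Finite M)

theorem Polynomial.Monic.finite_quotient_span {R : Type*} [CommRing R] [Finite R] {h : R[X]}
    (hh : h.Monic) : Finite (R[X] ⧸ Ideal.span {h}) :=
  have : Module.Finite R (R[X] ⧸ Ideal.span {h}) := hh.finite_adjoinRoot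
  Module.finite_of_finite R

theorem X_pow_finrank_sub_one_ne_zero {F E : Type*} [Field F] [Field E] [Algebra F E]
    [FiniteDimensional F E] : (X ^ Module.finrank F E - 1 : F[X]) ≠ 0 := by
  simpa using X_pow_sub_C_ne_zero (R := F) Module.finrank_pos 1

section PolyOrder

variable (F : Type*) [Field F] {M : Type*} [AddCommGroup M] [Module F[X] M]

open Classical in
/-- The `F_q`-order of the paper; it is `0` when `m` is not torsion. -/
noncomputable def polyOrder (m : M) : F[X] :=
  normalize (Submodule.IsPrincipal.generator (Ideal.torsionOf F[X] M m))

variable {F}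

theorem polyOrder_dvd_iff (m : M) (f : F[X]) : polyOrder F m ∣ f ↔ f • m = 0 := by
  classical
  rw [polyOrder, normalize_dvd_iff, ← Submodule.IsPrincipal.mem_iff_generator_dvd,
    Ideal.mem_torsionOf_iff]

theorem torsionOf_ne_bot_of_finite [Finite M] (m : M) : Ideal.torsionOf F[X] M m ≠ ⊥ := by
  intro h
  have hinj : Function.Injective fun f : F[X] => f • m := fun f g hfg => by
    rw [← sub_eq_zero, ← Ideal.mem_bot, ← h, Ideal.mem_torsionOf_iff, sub_smul, sub_eq_zero]
    exact hfg
  have := Finite.of_injective _ hinj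
  exact not_finite F[X]

theorem polyOrder_monic [Finite M] (m : M) : (polyOrder F m).Monic := by
  classical
  refine monic_normalize fun h => torsionOf_ne_bot_of_finite (F := F) m ?_
  rwa [Submodule.IsPrincipal.eq_bot_iff_generator_eq_zero]

theorem polyOrder_eq_iff {m : M} {g : F[X]} (hg : g.Monic) :
    polyOrder F m = g ↔ ∀ f : F[X], g ∣ f ↔ f • m = 0 := by
  refine ⟨fun h f => h ▸ polyOrder_dvd_iff m f, fun h => ?_⟩
  have hdvd : polyOrder F m ∣ g := (polyOrder_dvd_iff m g).2 ((h g).1 dvd_rfl)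
  have hdvd' : g ∣ polyOrder F m := (h _).2 ((polyOrder_dvd_iff m _).1 dvd_rfl)
  classical
  rw [← hg.normalize_eq_self, ← normalize_eq_normalize hdvd hdvd', polyOrder, normalize_idem]

theorem natCard_torsionBy_eq_finsum {M : Type*} [AddCommGroup M] [Module F[X] M] [Finite M]
    {g : F[X]} (hg : g ≠ 0) :
    Nat.card (Submodule.torsionBy F[X] M g) =
      ∑ᶠ d ∈ {d : F[X] | d.Monic ∧ d ∣ g}, Nat.card {m : M | polyOrder F m = d} := by
  have hpre : (Submodule.torsionBy F[X] M g : Set M) =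
      polyOrder F ⁻¹' {d : F[X] | d.Monic ∧ d ∣ g} := by
    ext m
    simp only [SetLike.mem_coe, Submodule.mem_torsionBy_iff, Set.mem_preimage, Set.mem_ofPred_eq,
      polyOrder_monic, true_and, polyOrder_dvd_iff]
  rw [← SetLike.coe_sort_coe, hpre, natCard_preimage_eq_finsum _ (finite_setOf_monic_dvd hg)]
  rfl

/-- Möbius inversion over the monic divisors of `g`, done as a strong induction on the degree. -/
theorem natCard_polyOrder_eq_of_natCard_torsionBy_eq {M₁ M₂ : Type*}
    [AddCommGroup M₁] [Module F[X] M₁] [Finite M₁] [AddCommGroup M₂] [Module F[X] M₂] [Finite M₂]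
    {g : F[X]} (hg : g.Monic)
    (hcard : ∀ d : F[X], d.Monic → d ∣ g →
      Nat.card (Submodule.torsionBy F[X] M₁ d) = Nat.card (Submodule.torsionBy F[X] M₂ d)) :
    Nat.card {m : M₁ | polyOrder F m = g} = Nat.card {m : M₂ | polyOrder F m = g} := by
  induction hN : g.natDegree using Nat.strong_induction_on generalizing g with
  | _ N ih =>
  have hgD : g ∈ {d : F[X] | d.Monic ∧ d ∣ g} := ⟨hg, dvd_rfl⟩
  have hproper : ∀ d ∈ {d : F[X] | d.Monic ∧ d ∣ g} \ {g},
      Nat.card {m : M₁ | polyOrder F m = d} = Nat.card {m : M₂ | polyOrder F m = d} := by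
    rintro d ⟨⟨hd, hdg⟩, hne : d ≠ g⟩
    have hlt : d.natDegree < N := hN ▸ lt_of_not_ge fun hle =>
      hne (eq_of_monic_of_dvd_of_natDegree_le hd hg hdg hle).symm
    exact ih _ hlt hd (fun e he hed => hcard e he (hed.trans hdg)) rfl
  have hg_notMem : g ∉ {d : F[X] | d.Monic ∧ d ∣ g} \ {g} :=
    Set.notMem_sdiff_of_mem (Set.mem_singleton g)
  have hfin : ({d : F[X] | d.Monic ∧ d ∣ g} \ {g}).Finite :=
    (finite_setOf_monic_dvd hg.ne_zero).sdiff
  have hsplit := hcard g hg dvd_rfl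
  rw [natCard_torsionBy_eq_finsum hg.ne_zero, natCard_torsionBy_eq_finsum hg.ne_zero,
    ← Set.insert_sdiff_self_of_mem hgD, finsum_mem_insert _ hg_notMem hfin,
    finsum_mem_insert _ hg_notMem hfin, finsum_mem_congr rfl hproper] at hsplit
  omega

end PolyOrder

section QuotientRing

variable {F : Type*} [Field F]

theorem natCard_torsionBy_quotient_span {h d : F[X]} (hh : h ≠ 0) (hd : d ∣ h) :
    Nat.card (Submodule.torsionBy F[X] (F[X] ⧸ Ideal.span {h}) d) =
      Nat.card F ^ d.natDegree := by
  obtain ⟨e, rfl⟩ := hd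
  have hd0 : d ≠ 0 := left_ne_zero_of_mul hh
  have : Module.Finite F (F[X] ⧸ Ideal.span {d * e}) := (AdjoinRoot.powerBasis hh).finite
  have hle : Ideal.span {d * e} ≤ Ideal.span {e} :=
    Ideal.span_singleton_le_span_singleton.2 (dvd_mul_left e d)
  let π := (Ideal.Quotient.factorₐ F hle).toLinearMap
  have hker : (Submodule.torsionBy F[X] (F[X] ⧸ Ideal.span {d * e}) d :
      Set (F[X] ⧸ Ideal.span {d * e})) = LinearMap.ker π := by
    ext u
    obtain ⟨x, rfl⟩ := Ideal.Quotient.mk_surjective u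
    change Ideal.Quotient.mk _ (d * x) = 0 ↔ π (Ideal.Quotient.mk _ x) = 0
    simp only [π, AlgHom.toLinearMap_apply, Ideal.Quotient.factorₐ_apply_mk,
      Ideal.Quotient.eq_zero_iff_mem, Ideal.mem_span_singleton, mul_dvd_mul_iff_left hd0]
  have hrank := LinearMap.finrank_range_add_finrank_ker π
  rw [LinearMap.range_eq_top.2 (Ideal.Quotient.factor_surjective hle), finrank_top,
    finrank_quotient_span_eq_natDegree, finrank_quotient_span_eq_natDegree,
    natDegree_mul hd0 (right_ne_zero_of_mul hh)] at hrank
  rw [← SetLike.coe_sort_coe, hker, SetLike.coe_sort_coe, Module.natCard_eq_pow_finrank (K := F)]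
  congr 1
  omega

theorem isUnit_iff_polyOrder_eq [Finite F] {h : F[X]} (hh : h.Monic)
    (u : F[X] ⧸ Ideal.span {h}) :
    IsUnit u ↔ polyOrder F u = h := by
  have := hh.finite_quotient_span
  have hsmul : ∀ f : F[X], f • u = Ideal.Quotient.mk _ f * u := fun f => Algebra.smul_def f u
  have hdvd : ∀ f : F[X], h ∣ f ↔ Ideal.Quotient.mk (Ideal.span {h}) f = 0 := fun f => by
    rw [Ideal.Quotient.eq_zero_iff_mem, Ideal.mem_span_singleton]
  rw [isUnit_iff_mem_nonZeroDivisors_of_finite, mem_nonZeroDivisors_iff_right,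
    polyOrder_eq_iff hh, Ideal.Quotient.mk_surjective.forall]
  simp only [hsmul, hdvd]
  exact forall_congr' fun f => ⟨fun H => ⟨fun h0 => by rw [h0, zero_mul], H⟩, fun H => H.2⟩

theorem phiPoly_eq_natCard_polyOrder [Finite F] {h : F[X]} (hh : h.Monic) :
    PhiPoly h = Nat.card {u : F[X] ⧸ Ideal.span {h} | polyOrder F u = h} := by
  rw [PhiPoly, ← Nat.card_range_of_injective Units.val_injective]
  congr
  ext u
  exact isUnit_iff_polyOrder_eq hh u

end QuotientRing

section Frobenius

open Module

variable (F E : Type*) [Field F] [Fintype F] [Field E] [Algebra F E]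

noncomputable abbrev frobeniusEnd : Module.End F E :=
  (FiniteField.frobeniusAlgHom F E).toLinearMap

variable {F E}

theorem frobeniusEnd_pow_apply (i : ℕ) (x : E) :
    (frobeniusEnd F E ^ i) x = x ^ Fintype.card F ^ i := by
  rw [Module.End.pow_apply, AlgHom.coe_toLinearMap, FiniteField.coe_frobeniusAlgHom, pow_iterate]

theorem pow_card_pow_mod_finrank [Fintype E] (α : E) (i : ℕ) :
    α ^ Fintype.card F ^ (i % finrank F E) = α ^ Fintype.card F ^ i := by
  conv_rhs => rw [← Nat.mod_add_div i (finrank F E), pow_add, pow_mul (Fintype.card F),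
    ← Module.card_eq_pow_finrank, pow_mul α, FiniteField.pow_card_pow]

theorem aeval_frobeniusEnd_X_pow_finrank_sub_one [Fintype E] :
    aeval (frobeniusEnd F E) (X ^ finrank F E - 1 : F[X]) = 0 := by
  ext x
  rw [map_sub, map_pow, aeval_X, map_one, LinearMap.sub_apply, frobeniusEnd_pow_apply,
    ← Module.card_eq_pow_finrank, FiniteField.pow_card, Module.End.one_apply, sub_self,
    LinearMap.zero_apply]

theorem eval_LPoly (f : F[X]) (x : E) :
    (LPoly (Fintype.card F) E f).eval x = aeval (frobeniusEnd F E) f x := by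
  rw [LPoly, Polynomial.sum_def, eval_finsetSum, aeval_def, eval₂_eq_sum, Polynomial.sum_def,
    LinearMap.sum_apply]
  refine Finset.sum_congr rfl fun i _ => ?_
  rw [eval_mul, eval_C, eval_pow, eval_X, Module.End.mul_apply, Module.algebraMap_end_apply,
    frobeniusEnd_pow_apply, Algebra.smul_def]

theorem natDegree_LPoly_le (f : F[X]) :
    (LPoly (Fintype.card F) E f).natDegree ≤ Fintype.card F ^ f.natDegree := by
  rw [LPoly, Polynomial.sum_def]
  refine natDegree_sum_le_of_forall_le _ _ fun i hi => (natDegree_C_mul_X_pow_le _ _).trans ?_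
  exact Nat.pow_le_pow_right Fintype.card_pos (le_natDegree_of_mem_supp i hi)

theorem coeff_LPoly_card_pow_natDegree (f : F[X]) :
    (LPoly (Fintype.card F) E f).coeff (Fintype.card F ^ f.natDegree) =
      algebraMap F E f.leadingCoeff := by
  rw [LPoly, Polynomial.sum_def, finsetSum_coeff, Finset.sum_eq_single f.natDegree]
  · rw [coeff_C_mul_X_pow, if_pos rfl, coeff_natDegree]
  · intro i _ hne
    rw [coeff_C_mul_X_pow, if_neg fun h => hne (Nat.pow_right_injective
      (Nat.succ_le_of_lt Fintype.one_lt_card) h).symm]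
  · intro hmem
    rw [coeff_C_mul_X_pow, if_pos rfl, notMem_support_iff.1 hmem, map_zero]

theorem finrank_ker_aeval_frobeniusEnd_le [Fintype E] {f : F[X]} (hf : f ≠ 0) :
    finrank F (LinearMap.ker (aeval (frobeniusEnd F E) f)) ≤ f.natDegree := by
  classical
  have hP : LPoly (Fintype.card F) E f ≠ 0 := fun h => hf <| leadingCoeff_eq_zero.1 <|
    (map_eq_zero_iff _ (algebraMap F E).injective).1 <| by
      rw [← coeff_LPoly_card_pow_natDegree, h, coeff_zero]
  have hroots : (LinearMap.ker (aeval (frobeniusEnd F E) f) : Set E).toFinset.val ⊆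
      (LPoly (Fintype.card F) E f).roots :=
    fun x hx => by
      rw [Finset.mem_val, Set.mem_toFinset, SetLike.mem_coe, LinearMap.mem_ker] at hx
      rw [mem_roots hP, IsRoot, eval_LPoly, hx]
  have hcard : Nat.card F ^ finrank F (LinearMap.ker (aeval (frobeniusEnd F E) f)) ≤
      Nat.card F ^ f.natDegree := by
    rw [← Module.natCard_eq_pow_finrank, Nat.card_eq_fintype_card (α := F)]
    change Nat.card (LinearMap.ker (aeval (frobeniusEnd F E) f) : Set E) ≤ _
    rw [Nat.card_eq_card_toFinset]
    exact (card_le_degree_of_subset_roots hroots).trans (natDegree_LPoly_le f)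
  exact (Nat.pow_le_pow_iff_right Finite.one_lt_card).1 hcard

theorem finrank_ker_aeval_frobeniusEnd [Fintype E] {g : F[X]} (hg : g ∣ X ^ finrank F E - 1) :
    finrank F (LinearMap.ker (aeval (frobeniusEnd F E) g)) = g.natDegree := by
  obtain ⟨h, hgh⟩ := hg
  have hg0 : g ≠ 0 := left_ne_zero_of_mul (hgh ▸ X_pow_finrank_sub_one_ne_zero)
  have hh0 : h ≠ 0 := right_ne_zero_of_mul (hgh ▸ X_pow_finrank_sub_one_ne_zero)
  have hdeg : g.natDegree + h.natDegree = finrank F E := by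
    rw [← natDegree_mul hg0 hh0, ← hgh, ← C_1, natDegree_X_pow_sub_C]
  have hrange : LinearMap.range (aeval (frobeniusEnd F E) g) ≤
      LinearMap.ker (aeval (frobeniusEnd F E) h) := by
    rintro _ ⟨x, rfl⟩
    rw [LinearMap.mem_ker, ← Module.End.mul_apply, ← map_mul, mul_comm, ← hgh,
      aeval_frobeniusEnd_X_pow_finrank_sub_one, LinearMap.zero_apply]
  have := LinearMap.finrank_range_add_finrank_ker (aeval (frobeniusEnd F E) g)
  have := Submodule.finrank_mono hrange
  have := finrank_ker_aeval_frobeniusEnd_le (E := E) hg0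
  have := finrank_ker_aeval_frobeniusEnd_le (E := E) hh0
  omega

theorem natCard_torsionBy_frobeniusEnd [Fintype E] {g : F[X]}
    (hg : g ∣ X ^ finrank F E - 1) :
    Nat.card (Submodule.torsionBy F[X] (AEval' (frobeniusEnd F E)) g) =
      Nat.card F ^ g.natDegree := by
  rw [← finrank_ker_aeval_frobeniusEnd hg, ← Module.natCard_eq_pow_finrank]
  refine Nat.card_congr ((AEval'.of (frobeniusEnd F E)).toEquiv.symm.subtypeEquiv fun m => ?_)
  exact (LinearEquiv.map_eq_zero_iff (AEval'.of (frobeniusEnd F E)).symm).symm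

theorem polyOrder_frobeniusEnd_dvd [Fintype E] (α : E) :
    polyOrder F (AEval'.of (frobeniusEnd F E) α) ∣ X ^ finrank F E - 1 := by
  rw [polyOrder_dvd_iff, ← AEval.of_aeval_smul, aeval_frobeniusEnd_X_pow_finrank_sub_one,
    zero_smul, map_zero]

theorem finrank_span_conjugates [Fintype E] (α : E) :
    finrank F (Submodule.span F
        (Set.range fun i : Fin (finrank F E) => α ^ Fintype.card F ^ (i : ℕ))) =
      (polyOrder F (AEval'.of (frobeniusEnd F E) α)).natDegree := by
  let T : F[X] →ₗ[F] E := LinearMap.applyₗ α ∘ₗ (aeval (frobeniusEnd F E)).toLinearMap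
  have hT : ∀ f, T f = aeval (frobeniusEnd F E) f α := fun _ => rfl
  have hrange : LinearMap.range T =
      Submodule.span F
        (Set.range fun i : Fin (finrank F E) => α ^ Fintype.card F ^ (i : ℕ)) := by
    refine le_antisymm ?_ (Submodule.span_le.2 ?_)
    · rintro _ ⟨f, rfl⟩
      rw [hT, aeval_eq_sum_range, LinearMap.sum_apply]
      refine Submodule.sum_mem _ fun i _ => ?_
      rw [LinearMap.smul_apply, frobeniusEnd_pow_apply, ← pow_card_pow_mod_finrank]
      exact Submodule.smul_mem _ _
        (Submodule.subset_span ⟨⟨i % finrank F E, Nat.mod_lt _ Module.finrank_pos⟩, rfl⟩)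
    · rintro _ ⟨i, rfl⟩
      exact ⟨X ^ (i : ℕ), by rw [hT, map_pow, aeval_X, frobeniusEnd_pow_apply]⟩
  rw [← hrange]
  refine finrank_range_eq_natDegree T fun f => ?_
  rw [polyOrder_dvd_iff, ← AEval.of_aeval_smul, LinearEquiv.map_eq_zero_iff, hT,
    Module.End.smul_def]

theorem natCard_polyOrder_frobeniusEnd_eq_phiPoly [Fintype E] {h : F[X]} (hh : h.Monic)
    (hdvd : h ∣ X ^ finrank F E - 1) :
    Nat.card {α : E | polyOrder F (AEval'.of (frobeniusEnd F E) α) = h} = PhiPoly h := by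
  have := Polynomial.Monic.finite_quotient_span (R := F) hh
  rw [phiPoly_eq_natCard_polyOrder hh]
  refine natCard_polyOrder_eq_of_natCard_torsionBy_eq (M₁ := AEval' (frobeniusEnd F E)) hh
    fun d _ hd => ?_
  rw [natCard_torsionBy_frobeniusEnd (hd.trans hdvd),
    natCard_torsionBy_quotient_span hh.ne_zero hd]

end Frobenius

theorem stmt13_general {F E : Type*} [Field F] [Fintype F] [Field E] [Fintype E] [Algebra F E]
    (q n k : ℕ) (hq : Fintype.card F = q) (hdim : Module.finrank F E = n) :
    Nat.card {α : E | IskNormal q n k F α} =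
      ∑ᶠ (h : Polynomial F)
        (_ : h.Monic ∧ h ∣ (X ^ n - 1 : Polynomial F) ∧ h.natDegree = n - k),
        PhiPoly h := by
  subst hq hdim
  set S := {h : F[X] | h.Monic ∧ h ∣ X ^ Module.finrank F E - 1 ∧
    h.natDegree = Module.finrank F E - k}
  let ord : E → F[X] := fun α => polyOrder F (Module.AEval'.of (frobeniusEnd F E) α)
  have hS : S.Finite :=
    (finite_setOf_monic_dvd X_pow_finrank_sub_one_ne_zero).subset fun h hh => ⟨hh.1, hh.2.1⟩
  have hpre : {α : E | IskNormal (Fintype.card F) (Module.finrank F E) k F α} = ord ⁻¹' S := by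
    ext α
    simp only [Set.mem_ofPred_eq, Set.mem_preimage, IskNormal, finrank_span_conjugates, ord, S,
      polyOrder_monic, polyOrder_frobeniusEnd_dvd, true_and]
  rw [hpre, natCard_preimage_eq_finsum ord hS]
  exact finsum_mem_congr rfl fun h ⟨hh, hdvd, _⟩ =>
    natCard_polyOrder_frobeniusEnd_eq_phiPoly hh hdvd

/-- The number of `k`-normal elements of `F_{q^n}` over `F_q` is
`Σ_{h ∣ x^n-1, deg h = n-k} Φ(h)`. -/
theorem stmt13 {F E : Type*} [Field F] [Fintype F] [Field E] [Fintype E] [Algebra F E]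
    (q n k : ℕ) (hq : Fintype.card F = q) (hn : 0 < n) (hdim : Module.finrank F E = n)
    (hk : k ≤ n) :
    Nat.card {α : E | IskNormal q n k F α} =
      ∑ᶠ (h : Polynomial F)
        (_ : h.Monic ∧ h ∣ (X ^ n - 1 : Polynomial F) ∧ h.natDegree = n - k),
        PhiPoly h :=
  stmt13_general q n k hq hdim
end
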